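/- Let f : [0,1] → ℝ be continuously differentiable, and let F : [0,1] × [0,1] → ℝ be continuously differentiable with F(x,x) = 0 for all x ∈ [0,1]. Then the following are equivalent: (i) for every 0 ≤ a ≤ b ≤ 1 and every ε > 0 there exists δ > 0 such that for every partition a = x₀ < x₁ < ⋯ < x_n = b with max_i (x_{i+1} − x_i) < δ one has |∑_{i=0}^{n−1} F(x_i, x_{i+1}) − ∫_a^b f(t) dt| < ε (the generalized Riemann sums of F converge to ∫_a^b f as the mesh tends to 0); (ii) for every x ∈ [0,1], the function y ↦ F(x,y) is differentiable at y = x with derivative f(x). -/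

import Mathlib

/-! Let `g x` be the derivative of `y ↦ F x y` at `y = x`. Since `F x x = 0`, the mean value
inequality and the uniform continuity of `∂₂F` on the compact square give
`F x y = g x * (y - x) + o(y - x) = ∫_x^y g + o(y - x)` uniformly in `x ≤ y`; summing over a
partition, the generalized Riemann sums of `F` converge to `∫_a^b g` on every `[a, b]`. So (i)
says that `∫_a^b f = ∫_a^b g` for all `a ≤ b`, i.e. that the continuous functions `f` and `g`
agree on `[0, 1]`, and by uniqueness of derivatives this is also what (ii) says. -/

open MeasureTheory Set Function

def HasRiemannSumLimit (F : ℝ → ℝ → ℝ) (a b I : ℝ) : Prop :=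
  ∀ ε > (0:ℝ), ∃ δ > (0:ℝ), ∀ (n : ℕ) (x : ℕ → ℝ), x 0 = a → x n = b →
    (∀ i < n, x i < x (i + 1)) → (∀ i < n, x (i + 1) - x i < δ) →
    |(∑ i ∈ Finset.range n, F (x i) (x (i + 1))) - I| < ε

lemma mem_Icc_of_partition {a b : ℝ} {n : ℕ} {x : ℕ → ℝ} (h0 : x 0 = a) (hn : x n = b)
    (hx : ∀ i < n, x i < x (i + 1)) {i : ℕ} (hi : i ≤ n) : x i ∈ Icc a b := by
  have hmono := (strictMonoOn_Iic_of_lt_succ hx).monotoneOn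
  exact ⟨h0 ▸ hmono (Nat.zero_le n) hi (Nat.zero_le i), hn ▸ hmono hi (le_refl n) hi⟩

lemma exists_partition_mesh_lt {a b δ : ℝ} (hab : a ≤ b) (hδ : 0 < δ) :
    ∃ (n : ℕ) (x : ℕ → ℝ), x 0 = a ∧ x n = b ∧ (∀ i < n, x i < x (i + 1)) ∧
      ∀ i < n, x (i + 1) - x i < δ := by
  rcases hab.eq_or_lt with rfl | hab
  · exact ⟨0, fun _ => a, rfl, rfl, by simp, by simp⟩
  obtain ⟨n, hn⟩ := exists_nat_gt ((b - a) / δ)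
  have hn0 : (0:ℝ) < n := (div_pos (sub_pos.2 hab) hδ).trans hn
  have hstep : ∀ i : ℕ,
      a + (i + 1 : ℕ) * ((b - a) / n) - (a + i * ((b - a) / n)) = (b - a) / n := by
    intro i
    push_cast
    ring
  refine ⟨n, fun i => a + i * ((b - a) / n), by simp, by field_simp; ring, fun i _ => ?_,
    fun i _ => ?_⟩
  · linarith [hstep i, div_pos (sub_pos.2 hab) hn0]
  · rw [hstep i, div_lt_iff₀ hn0]
    rw [div_lt_iff₀ hδ] at hn
    linarith

lemma HasRiemannSumLimit.unique {F : ℝ → ℝ → ℝ} {a b I J : ℝ} (hab : a ≤ b)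
    (hI : HasRiemannSumLimit F a b I) (hJ : HasRiemannSumLimit F a b J) : I = J := by
  refine eq_of_forall_dist_le fun ε hε => ?_
  obtain ⟨δ₁, hδ₁, h₁⟩ := hI (ε / 2) (half_pos hε)
  obtain ⟨δ₂, hδ₂, h₂⟩ := hJ (ε / 2) (half_pos hε)
  obtain ⟨n, x, h0, hn, hx, hmesh⟩ := exists_partition_mesh_lt hab (lt_min hδ₁ hδ₂)
  have e₁ := h₁ n x h0 hn hx fun i hi => (hmesh i hi).trans_le (min_le_left _ _)
  have e₂ := h₂ n x h0 hn hx fun i hi => (hmesh i hi).trans_le (min_le_right _ _)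
  rw [Real.dist_eq]
  linarith [abs_sub_le I (∑ i ∈ Finset.range n, F (x i) (x (i + 1))) J,
    abs_sub_comm I (∑ i ∈ Finset.range n, F (x i) (x (i + 1)))]

lemma hasRiemannSumLimit_iff_eq {F : ℝ → ℝ → ℝ} {a b I J : ℝ} (hab : a ≤ b)
    (hI : HasRiemannSumLimit F a b I) : HasRiemannSumLimit F a b J ↔ J = I :=
  ⟨fun hJ => hJ.unique hab hI, fun h => h ▸ hI⟩

lemma hasRiemannSumLimit_intervalIntegral {g : ℝ → ℝ} {a b : ℝ}
    (hg : IntervalIntegrable g volume a b) :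
    HasRiemannSumLimit (fun x y => ∫ t in x..y, g t) a b (∫ t in a..b, g t) := by
  refine fun ε hε => ⟨1, one_pos, fun n x h0 hn hx _ => ?_⟩
  have hmem : ∀ i ≤ n, x i ∈ uIcc a b := fun i hi =>
    Icc_subset_uIcc (mem_Icc_of_partition h0 hn hx hi)
  rwa [intervalIntegral.sum_integral_adjacent_intervals fun i hi =>
    hg.mono_set (uIcc_subset_uIcc (hmem i hi.le) (hmem (i + 1) hi)), h0, hn, sub_self, abs_zero]

/-- `F x y - G x y = o(y - x)` as `y - x → 0⁺`, uniformly for `x ≤ y` in `s`. -/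
def UniformlyCloseOn (F G : ℝ → ℝ → ℝ) (s : Set ℝ) : Prop :=
  ∀ ε > (0:ℝ), ∃ δ > (0:ℝ), ∀ x ∈ s, ∀ y ∈ s, x ≤ y → y - x < δ →
    |F x y - G x y| ≤ ε * (y - x)

namespace UniformlyCloseOn

variable {F G H : ℝ → ℝ → ℝ} {s : Set ℝ}

lemma symm (h : UniformlyCloseOn F G s) : UniformlyCloseOn G F s := by
  simpa only [UniformlyCloseOn, abs_sub_comm] using h

lemma trans (hFG : UniformlyCloseOn F G s) (hGH : UniformlyCloseOn G H s) :
    UniformlyCloseOn F H s := by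
  intro ε hε
  obtain ⟨δ₁, hδ₁, h₁⟩ := hFG (ε / 2) (half_pos hε)
  obtain ⟨δ₂, hδ₂, h₂⟩ := hGH (ε / 2) (half_pos hε)
  refine ⟨min δ₁ δ₂, lt_min hδ₁ hδ₂, fun x hx y hy hxy hδ => ?_⟩
  have e₁ := h₁ x hx y hy hxy (hδ.trans_le (min_le_left _ _))
  have e₂ := h₂ x hx y hy hxy (hδ.trans_le (min_le_right _ _))
  linarith [abs_sub_le (F x y) (G x y) (H x y)]

end UniformlyCloseOn

lemma HasRiemannSumLimit.of_uniformlyCloseOn {F G : ℝ → ℝ → ℝ} {s : Set ℝ} {a b I : ℝ}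
    (hG : HasRiemannSumLimit G a b I) (hFG : UniformlyCloseOn F G s) (hab : Icc a b ⊆ s) :
    HasRiemannSumLimit F a b I := by
  intro ε hε
  set ε' := ε / (2 * (|b - a| + 1))
  have hε' : 0 < ε' := by positivity
  obtain ⟨δ₁, hδ₁, h₁⟩ := hG (ε / 2) (half_pos hε)
  obtain ⟨δ₂, hδ₂, h₂⟩ := hFG ε' hε'
  refine ⟨min δ₁ δ₂, lt_min hδ₁ hδ₂, fun n x h0 hn hx hmesh => ?_⟩
  have hsumG := h₁ n x h0 hn hx fun i hi => (hmesh i hi).trans_le (min_le_left _ _)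
  have hterm : ∀ i ∈ Finset.range n,
      |F (x i) (x (i + 1)) - G (x i) (x (i + 1))| ≤ ε' * (x (i + 1) - x i) := fun i hi => by
    have hi := Finset.mem_range.1 hi
    exact h₂ _ (hab (mem_Icc_of_partition h0 hn hx hi.le)) _
      (hab (mem_Icc_of_partition h0 hn hx hi)) (hx i hi).le
      ((hmesh i hi).trans_le (min_le_right _ _))
  have hsumFG :
      |∑ i ∈ Finset.range n, (F (x i) (x (i + 1)) - G (x i) (x (i + 1)))| ≤ ε' * (b - a) :=
    calc _ ≤ ∑ i ∈ Finset.range n, |F (x i) (x (i + 1)) - G (x i) (x (i + 1))| :=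
          Finset.abs_sum_le_sum_abs _ _
      _ ≤ ∑ i ∈ Finset.range n, ε' * (x (i + 1) - x i) := Finset.sum_le_sum hterm
      _ = ε' * (b - a) := by rw [← Finset.mul_sum, Finset.sum_range_sub x, h0, hn]
  have hε'ba : ε' * (b - a) < ε / 2 := by
    calc ε' * (b - a) ≤ ε' * |b - a| := mul_le_mul_of_nonneg_left (le_abs_self _) hε'.le
      _ < ε' * (2 * (|b - a| + 1)) / 2 := by nlinarith
      _ = ε / 2 := by rw [div_mul_cancel₀ _ (by positivity)]
  rw [Finset.sum_sub_distrib] at hsumFG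
  linarith [abs_sub_le (∑ i ∈ Finset.range n, F (x i) (x (i + 1)))
    (∑ i ∈ Finset.range n, G (x i) (x (i + 1))) I]

lemma uniformlyCloseOn_of_hasDerivWithinAt {F D : ℝ → ℝ → ℝ} {s : Set ℝ}
    (hs : IsCompact s) (hs' : s.OrdConnected)
    (hD : ∀ x ∈ s, ∀ y ∈ s, HasDerivWithinAt (F x) (D x y) s y)
    (hDc : ContinuousOn (uncurry D) (s ×ˢ s)) (hF0 : ∀ x ∈ s, F x x = 0) :
    UniformlyCloseOn F (fun x y => D x x * (y - x)) s := by
  intro ε hε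
  obtain ⟨δ, hδ, hDδ⟩ := Metric.uniformContinuousOn_iff.1
    ((hs.prod hs).uniformContinuousOn_of_continuous hDc) ε hε
  refine ⟨δ, hδ, fun x hx y hy hxy hxyδ => ?_⟩
  have hsub : Icc x y ⊆ s := hs'.out hx hy
  have hderiv : ∀ t ∈ Icc x y, HasDerivWithinAt (fun t => F x t - D x x * t)
      (D x t - D x x) (Icc x y) t := fun t ht => by
    exact ((hD x hx t (hsub ht)).mono hsub).sub
      (by simpa using (hasDerivWithinAt_id t _).const_mul (D x x))
  have hbound : ∀ t ∈ Icc x y, ‖D x t - D x x‖ ≤ ε := fun t ht => by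
    refine (hDδ (x, t) ⟨hx, hsub ht⟩ (x, x) ⟨hx, hx⟩ ?_).le
    rw [Prod.dist_eq, dist_self, Real.dist_eq, abs_of_nonneg (by linarith [ht.1])]
    exact max_lt hδ (by linarith [ht.2])
  have := (convex_Icc x y).norm_image_sub_le_of_norm_hasDerivWithin_le hderiv hbound
    (left_mem_Icc.2 hxy) (right_mem_Icc.2 hxy)
  rw [hF0 x hx, Real.norm_eq_abs, Real.norm_eq_abs, abs_of_nonneg (sub_nonneg.2 hxy)] at this
  convert this using 2
  ring

lemma uniformlyCloseOn_intervalIntegral {g : ℝ → ℝ} {s : Set ℝ} (hs : IsCompact s)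
    (hs' : s.OrdConnected) (hg : ContinuousOn g s) :
    UniformlyCloseOn (fun x y => ∫ t in x..y, g t) (fun x y => g x * (y - x)) s := by
  intro ε hε
  obtain ⟨δ, hδ, hgδ⟩ := Metric.uniformContinuousOn_iff.1
    (hs.uniformContinuousOn_of_continuous hg) ε hε
  refine ⟨δ, hδ, fun x hx y hy hxy hxyδ => ?_⟩
  have hsub : Icc x y ⊆ s := hs'.out hx hy
  have hbound : ∀ t ∈ uIoc x y, ‖g t - g x‖ ≤ ε := fun t ht => by
    rw [uIoc_of_le hxy] at ht
    refine (hgδ t (hsub (Ioc_subset_Icc_self ht)) x hx ?_).le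
    rw [Real.dist_eq, abs_of_nonneg (by linarith [ht.1])]
    linarith [ht.2]
  have := intervalIntegral.norm_integral_le_of_norm_le_const hbound
  rw [intervalIntegral.integral_sub ((hg.mono hsub).intervalIntegrable_of_Icc hxy)
    intervalIntegrable_const, intervalIntegral.integral_const, smul_eq_mul, Real.norm_eq_abs,
    abs_of_nonneg (sub_nonneg.2 hxy), mul_comm (y - x)] at this
  exact this

lemma forall_intervalIntegral_eq_iff_eqOn {f g : ℝ → ℝ} {a b : ℝ} (hab : a < b)
    (hf : ContinuousOn f (Icc a b)) (hg : ContinuousOn g (Icc a b)) :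
    (∀ c d, a ≤ c → c ≤ d → d ≤ b → ∫ t in c..d, f t = ∫ t in c..d, g t) ↔
      EqOn f g (Icc a b) := by
  refine ⟨fun h u hu => ?_, fun h c d hc hcd hd => intervalIntegral.integral_congr
    (h.mono ((uIcc_of_le hcd).trans_subset (Icc_subset_Icc hc hd)))⟩
  have : Fact (u ∈ Icc a b) := ⟨hu⟩
  have hFTC : ∀ φ : ℝ → ℝ, ContinuousOn φ (Icc a b) →
      HasDerivWithinAt (fun v => ∫ t in a..v, φ t) (φ u) (Icc a b) u := fun φ hφ =>
    intervalIntegral.integral_hasDerivWithinAt_right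
      ((hφ.mono (Icc_subset_Icc_right hu.2)).intervalIntegrable_of_Icc hu.1)
      (hφ.stronglyMeasurableAtFilter_nhdsWithin measurableSet_Icc u) (hφ u hu)
  exact (uniqueDiffOn_Icc hab u hu).eq_deriv _
    ((hFTC f hf).congr_of_mem (fun v hv => (h a v le_rfl hv.1 hv.2).symm) hu) (hFTC g hg)

lemma DifferentiableWithinAt.hasDerivWithinAt_curry {F : ℝ → ℝ → ℝ} {s : Set (ℝ × ℝ)}
    {t : Set ℝ} {x y : ℝ} (hF : DifferentiableWithinAt ℝ (uncurry F) s (x, y))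
    (hst : MapsTo (x, ·) t s) :
    HasDerivWithinAt (F x) (fderivWithin ℝ (uncurry F) s (x, y) (0, 1)) t y :=
  hF.hasFDerivWithinAt.comp_hasDerivWithinAt y
    ((hasDerivWithinAt_const y t x).prodMk (hasDerivWithinAt_id y t)) hst

theorem generalized_riemann_sums_converge_iff_diagonal_derivative
    (f : ℝ → ℝ) (F : ℝ → ℝ → ℝ)
    (hf : ContDiffOn ℝ 1 f (Set.Icc 0 1))
    (hF : ContDiffOn ℝ 1 (fun p : ℝ × ℝ => F p.1 p.2) (Set.Icc 0 1 ×ˢ Set.Icc 0 1))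
    (hF0 : ∀ x ∈ Set.Icc (0:ℝ) 1, F x x = 0) :
    (∀ a b : ℝ, 0 ≤ a → a ≤ b → b ≤ 1 → ∀ ε > (0:ℝ), ∃ δ > (0:ℝ),
        ∀ (n : ℕ) (x : ℕ → ℝ), x 0 = a → x n = b →
          (∀ i < n, x i < x (i + 1)) → (∀ i < n, x (i + 1) - x i < δ) →
          |(∑ i ∈ Finset.range n, F (x i) (x (i + 1))) - ∫ t in a..b, f t| < ε) ↔
    (∀ x ∈ Set.Icc (0:ℝ) 1,
        HasDerivWithinAt (fun y => F x y) (f x) (Set.Icc 0 1) x) := by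
  set s := Icc (0:ℝ) 1
  set D : ℝ → ℝ → ℝ := fun x y => fderivWithin ℝ (uncurry F) (s ×ˢ s) (x, y) (0, 1)
  have hs : UniqueDiffOn ℝ s := uniqueDiffOn_Icc zero_lt_one
  have hD : ∀ x ∈ s, ∀ y ∈ s, HasDerivWithinAt (F x) (D x y) s y := fun x hx y hy =>
    (hF.differentiableOn one_ne_zero (x, y) ⟨hx, hy⟩).hasDerivWithinAt_curry
      fun _ ht => ⟨hx, ht⟩
  have hDc : ContinuousOn (uncurry D) (s ×ˢ s) :=
    (hF.continuousOn_fderivWithin (hs.prod hs) le_rfl).clm_apply continuousOn_const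
  have hg : ContinuousOn (fun x => D x x) s :=
    hDc.comp (continuousOn_id.prodMk continuousOn_id) fun _ hx => ⟨hx, hx⟩
  have hlim : ∀ a b, 0 ≤ a → a ≤ b → b ≤ 1 →
      HasRiemannSumLimit F a b (∫ t in a..b, D t t) :=
    fun a b ha hab hb =>
      (hasRiemannSumLimit_intervalIntegral
        ((hg.mono (Icc_subset_Icc ha hb)).intervalIntegrable_of_Icc hab)).of_uniformlyCloseOn
      ((uniformlyCloseOn_of_hasDerivWithinAt isCompact_Icc ordConnected_Icc hD hDc hF0).trans
        (uniformlyCloseOn_intervalIntegral isCompact_Icc ordConnected_Icc hg).symm)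
      (Icc_subset_Icc ha hb)
  calc _ ↔ ∀ a b : ℝ, 0 ≤ a → a ≤ b → b ≤ 1 →
          ∫ t in a..b, f t = ∫ t in a..b, D t t :=
        forall₂_congr fun a b => forall_congr' fun ha => forall_congr' fun hab =>
          forall_congr' fun hb => hasRiemannSumLimit_iff_eq hab (hlim a b ha hab hb)
    _ ↔ EqOn f (fun x => D x x) s :=
        forall_intervalIntegral_eq_iff_eqOn zero_lt_one hf.continuousOn hg
    _ ↔ _ := forall₂_congr fun x hx =>
        ⟨fun h => h ▸ hD x hx x hx, fun h => (hs x hx).eq_deriv _ h (hD x hx x hx)⟩
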